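/- Preservation: If Γ ⊢^θ a : A and a ⇝ a', then Γ ⊢^θ a' : A. -/

import Mathlib

/-- Consistency classifiers: the logical (L) and programmatic (P) fragments. -/
inductive Frag : Type
  | L | P
deriving DecidableEq, Repr

/-- Types, with de Bruijn type variables for recursive types. -/
inductive Ty : Type
  | unit : Ty
  | arrow : Ty → Frag → Ty → Ty       -- A →^θ B
  | sum : Ty → Ty → Ty                -- A + B
  | at_ : Ty → Frag → Ty              -- A @ θ
  | tvar : ℕ → Ty                     -- α
  | mu : Ty → Ty                      -- μα. A  (binds one type variable)
deriving DecidableEq, Repr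

namespace Ty

def size : Ty → ℕ
  | unit => 1
  | arrow A _ B => A.size + B.size + 1
  | sum A B => A.size + B.size + 1
  | at_ A _ => A.size + 1
  | tvar _ => 1
  | mu A => A.size + 1

def rename (ρ : ℕ → ℕ) : Ty → Ty
  | unit => unit
  | arrow A θ B => arrow (A.rename ρ) θ (B.rename ρ)
  | sum A B => sum (A.rename ρ) (B.rename ρ)
  | at_ A θ => at_ (A.rename ρ) θ
  | tvar n => tvar (ρ n)
  | mu A => mu (A.rename (fun n => match n with | 0 => 0 | n+1 => ρ n + 1))

def subst (σ : ℕ → Ty) : Ty → Ty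
  | unit => unit
  | arrow A θ B => arrow (A.subst σ) θ (B.subst σ)
  | sum A B => sum (A.subst σ) (B.subst σ)
  | at_ A θ => at_ (A.subst σ) θ
  | tvar n => σ n
  | mu A => mu (A.subst (fun n => match n with | 0 => tvar 0 | n+1 => (σ n).rename Nat.succ))

end Ty

/-- [B/α]A : substitute B for the outermost type variable of A. -/
def tsubst0 (B A : Ty) : Ty := A.subst (fun n => match n with | 0 => B | n+1 => .tvar n)

/-- Terms, with de Bruijn term variables.  `lam` binds one variable (x);
    `rec` binds two: index 0 is x, index 1 is f.  `unbox` and the branches of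
    `case` bind one variable. -/
inductive Tm : Type
  | var : ℕ → Tm
  | lam : Tm → Tm                     -- λx. a
  | recc : Tm → Tm                     -- rec f x. a
  | app : Tm → Tm → Tm
  | box : Tm → Tm
  | unbox : Tm → Tm → Tm              -- unbox x = a in b
  | unit : Tm
  | inl : Tm → Tm
  | inr : Tm → Tm
  | case : Tm → Tm → Tm → Tm          -- case a of {inl x ⇒ b1 ; inr x ⇒ b2}
  | roll : Tm → Tm
  | unroll : Tm → Tm
deriving DecidableEq, Repr

namespace Tm

def liftR (ρ : ℕ → ℕ) : ℕ → ℕ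
  | 0 => 0
  | n+1 => ρ n + 1

def rename (ρ : ℕ → ℕ) : Tm → Tm
  | var n => var (ρ n)
  | lam a => lam (a.rename (liftR ρ))
  | recc a => recc (a.rename (liftR (liftR ρ)))
  | app a b => app (a.rename ρ) (b.rename ρ)
  | box a => box (a.rename ρ)
  | unbox a b => unbox (a.rename ρ) (b.rename (liftR ρ))
  | unit => unit
  | inl a => inl (a.rename ρ)
  | inr a => inr (a.rename ρ)
  | case a b c => case (a.rename ρ) (b.rename (liftR ρ)) (c.rename (liftR ρ))
  | roll a => roll (a.rename ρ)
  | unroll a => unroll (a.rename ρ)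

def liftS (σ : ℕ → Tm) : ℕ → Tm
  | 0 => var 0
  | n+1 => (σ n).rename Nat.succ

def subst (σ : ℕ → Tm) : Tm → Tm
  | var n => σ n
  | lam a => lam (a.subst (liftS σ))
  | recc a => recc (a.subst (liftS (liftS σ)))
  | app a b => app (a.subst σ) (b.subst σ)
  | box a => box (a.subst σ)
  | unbox a b => unbox (a.subst σ) (b.subst (liftS σ))
  | unit => unit
  | inl a => inl (a.subst σ)
  | inr a => inr (a.subst σ)
  | case a b c => case (a.subst σ) (b.subst (liftS σ)) (c.subst (liftS σ))
  | roll a => roll (a.subst σ)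
  | unroll a => unroll (a.subst σ)

end Tm

/-- [v/x]a : substitute v for the outermost term variable of a. -/
def subst1 (a v : Tm) : Tm := a.subst (fun n => match n with | 0 => v | n+1 => .var n)

/-- [v/x][w/f]a : substitute v for index 0 (x) and w for index 1 (f) in a. -/
def subst2 (a v w : Tm) : Tm :=
  a.subst (fun n => match n with | 0 => v | 1 => w | n+2 => .var n)

/-- Values. -/
inductive IsValue : Tm → Prop
  | var (n : ℕ) : IsValue (.var n)
  | unit : IsValue .unit
  | inl {v} : IsValue v → IsValue (.inl v)
  | inr {v} : IsValue v → IsValue (.inr v)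
  | lam (a : Tm) : IsValue (.lam a)
  | recc (a : Tm) : IsValue (.recc a)
  | box {v} : IsValue v → IsValue (.box v)
  | roll {v} : IsValue v → IsValue (.roll v)

/-- First-order types. -/
inductive FO : Ty → Prop
  | unit : FO .unit
  | sum {A B} : FO A → FO B → FO (.sum A B)
  | at_ (A : Ty) (θ : Frag) : FO (.at_ A θ)

/-- Typing contexts: each variable is tagged with a fragment. -/
abbrev Ctx := List (Frag × Ty)

/-- The typing judgement Γ ⊢^θ a : A. -/
inductive Typing : Ctx → Frag → Tm → Ty → Prop
  | tvar {Γ θ A n} : Γ[n]? = some (θ, A) → Typing Γ θ (.var n) A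
  | tlam {Γ θ' A B a} :
      Typing ((θ', A) :: Γ) .L a B →
      Typing Γ .L (.lam a) (.arrow A θ' B)
  | trec {Γ θ' A B a} :
      Typing ((θ', A) :: (.P, .arrow A θ' B) :: Γ) .P a B →
      Typing Γ .P (.recc a) (.arrow A θ' B)
  | tboxP {Γ θ a A} :
      Typing Γ θ a A → Typing Γ .P (.box a) (.at_ A θ)
  | tboxL {Γ θ a A} :
      Typing Γ .L a A → Typing Γ .L (.box a) (.at_ A θ)
  | tboxLV {Γ v A} :
      IsValue v → Typing Γ .P v A → Typing Γ .L (.box v) (.at_ A .P)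
  | tunbox {Γ θ θ' a b A B} :
      Typing Γ θ a (.at_ A θ') →
      Typing ((θ', A) :: Γ) θ b B →
      Typing Γ θ (.unbox a b) B
  | tapp {Γ θ θ' a b A B} :
      Typing Γ θ a (.arrow A θ' B) →
      Typing Γ θ (.box b) (.at_ A θ') →
      Typing Γ θ (.app a b) B
  | tunit {Γ θ} : Typing Γ θ .unit .unit
  | tsub {Γ a A} : Typing Γ .L a A → Typing Γ .P a A
  | tfoval {Γ v A} :
      IsValue v → FO A → Typing Γ .P v A → Typing Γ .L v A
  | tinl {Γ θ a A B} : Typing Γ θ a A → Typing Γ θ (.inl a) (.sum A B)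
  | tinr {Γ θ a A B} : Typing Γ θ a B → Typing Γ θ (.inr a) (.sum A B)
  | tcase {Γ θ θ' a b1 b2 A B C} :
      Typing Γ θ (.box a) (.at_ (.sum A B) θ') →
      Typing ((θ', A) :: Γ) θ b1 C →
      Typing ((θ', B) :: Γ) θ b2 C →
      Typing Γ θ (.case a b1 b2) C
  | troll {Γ a A} :
      Typing Γ .P a (tsubst0 (.mu A) A) →
      Typing Γ .P (.roll a) (.mu A)
  | tunroll {Γ a A} :
      Typing Γ .P a (.mu A) →
      Typing Γ .P (.unroll a) (tsubst0 (.mu A) A)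

/-- Call-by-value small-step reduction a ⇝ b. -/
inductive Step : Tm → Tm → Prop
  | beta {a v} : IsValue v → Step (.app (.lam a) v) (subst1 a v)
  | betaRec {a v} : IsValue v → Step (.app (.recc a) v) (subst2 a v (.recc a))
  | unbox {v b} : IsValue v → Step (.unbox (.box v) b) (subst1 b v)
  | caseL {v b1 b2} : IsValue v → Step (.case (.inl v) b1 b2) (subst1 b1 v)
  | caseR {v b1 b2} : IsValue v → Step (.case (.inr v) b1 b2) (subst1 b2 v)
  | unroll {v} : IsValue v → Step (.unroll (.roll v)) v
  | app1 {a a' b} : Step a a' → Step (.app a b) (.app a' b)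
  | app2 {v b b'} : IsValue v → Step b b' → Step (.app v b) (.app v b')
  | inl {a a'} : Step a a' → Step (.inl a) (.inl a')
  | inr {a a'} : Step a a' → Step (.inr a) (.inr a')
  | caseCtx {a a' b1 b2} : Step a a' → Step (.case a b1 b2) (.case a' b1 b2)
  | box {a a'} : Step a a' → Step (.box a) (.box a')
  | unbox1 {a a' b} : Step a a' → Step (.unbox a b) (.unbox a' b)
  | roll {a a'} : Step a a' → Step (.roll a) (.roll a')
  | unrollCtx {a a'} : Step a a' → Step (.unroll a) (.unroll a')

/-- Indexed multi-step reduction a ⇝^n b. -/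
inductive StepN : ℕ → Tm → Tm → Prop
  | refl (a : Tm) : StepN 0 a a
  | step {n a b c} : Step a b → StepN n b c → StepN (n+1) a c

/-- Multi-step reduction a ⇝* b. -/
inductive StepStar : Tm → Tm → Prop
  | refl (a : Tm) : StepStar a a
  | step {a b c} : Step a b → StepStar b c → StepStar a c

/-- The step-indexed value interpretation V[[A]]^θ_k.
    (The computational interpretation C[[·]] is inlined in the function-type
    and recursive-type cases; see `Cint` below.) -/
def Vint (k : ℕ) (θ : Frag) (A : Ty) : Set Tm :=
  match A, θ with
  | .unit, _ => {Tm.unit}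
  | .sum A B, θ =>
      {t | (∃ v, t = Tm.inl v ∧ v ∈ Vint k θ A) ∨ (∃ v, t = Tm.inr v ∧ v ∈ Vint k θ B)}
  | .at_ A θ', _ => {t | ∃ v, t = Tm.box v ∧ v ∈ Vint k θ' A}
  | .arrow A θ' B, .L =>
      {t | ∃ a, t = Tm.lam a ∧ Typing [] .L (Tm.lam a) (.arrow A θ' B) ∧
        ∀ j, j ≤ k → ∀ v, v ∈ Vint j θ' A →
          Typing [] .L (subst1 a v) B ∧
          ∃ w, StepStar (subst1 a v) w ∧ IsValue w ∧ w ∈ Vint j .L B}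
  | .arrow A θ' B, .P =>
      {t | ∃ a, t = Tm.recc a ∧ Typing [] .P (Tm.recc a) (.arrow A θ' B) ∧
        ∀ j, j < k → ∀ v, v ∈ Vint j θ' A →
          Typing [] .P (subst2 a v (Tm.recc a)) B ∧
          ∀ i, i ≤ j → ∀ w, StepN i (subst2 a v (Tm.recc a)) w → IsValue w →
            w ∈ Vint (j - i) .P B}
  | .mu _, .L => ∅
  | .mu A, .P =>
      {t | ∃ v, t = Tm.roll v ∧ Typing [] .P (Tm.roll v) (.mu A) ∧
        ∀ j, j < k → v ∈ Vint j .P (tsubst0 (.mu A) A)}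
  | .tvar _, _ => ∅
termination_by (k, A.size)
decreasing_by
  all_goals simp only [Prod.lex_def, Ty.size, true_and, eq_self_iff_true]
  all_goals omega

/-- The step-indexed computational interpretation C[[A]]^θ_k. -/
def Cint (k : ℕ) (θ : Frag) (A : Ty) : Set Tm :=
  match θ with
  | .P => {a | Typing [] .P a A ∧
      ∀ j, j ≤ k → ∀ v, StepN j a v → IsValue v → v ∈ Vint (k - j) .P A}
  | .L => {a | Typing [] .L a A ∧
      ∃ v, StepStar a v ∧ IsValue v ∧ v ∈ Vint k .L A}

/-! Induction on the typing derivation. Congruence steps are the induction hypothesis. At a redex,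
the typing of the introduction form is inverted, looking through the subsumption rules `tsub`
and `tfoval`; the contractum is then typed by substituting values for variables, which preserves
typing because values stay values under renaming and value substitution. -/

theorem IsValue.rename {v : Tm} (h : IsValue v) (ρ : ℕ → ℕ) : IsValue (v.rename ρ) := by
  induction h with
  | var n => exact .var _
  | unit => exact .unit
  | inl _ ih => exact .inl ih
  | inr _ ih => exact .inr ih
  | lam a => exact .lam _
  | recc a => exact .recc _
  | box _ ih => exact .box ih
  | roll _ ih => exact .roll ih

theorem IsValue.subst {v : Tm} (h : IsValue v) {σ : ℕ → Tm} (hσ : ∀ n, IsValue (σ n)) :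
    IsValue (v.subst σ) := by
  induction h with
  | var n => exact hσ n
  | unit => exact .unit
  | inl _ ih => exact .inl ih
  | inr _ ih => exact .inr ih
  | lam a => exact .lam _
  | recc a => exact .recc _
  | box _ ih => exact .box ih
  | roll _ ih => exact .roll ih

theorem IsValue.not_step {v a : Tm} (h : IsValue v) : ¬ Step v a := by
  induction h generalizing a with
  | inl _ ih | inr _ ih | box _ ih | roll _ ih =>
    intro hs
    cases hs with
    | _ hs => exact ih hs
  | _ => rintro ⟨⟩

theorem Typing.of_L {Γ a A} (h : Typing Γ .L a A) : ∀ θ, Typing Γ θ a A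
  | .L => h
  | .P => .tsub h

def IsRenaming (ρ : ℕ → ℕ) (Γ Δ : Ctx) : Prop :=
  ∀ n p, Γ[n]? = some p → Δ[ρ n]? = some p

theorem IsRenaming.liftR {ρ : ℕ → ℕ} {Γ Δ : Ctx} (hρ : IsRenaming ρ Γ Δ) (p : Frag × Ty) :
    IsRenaming (Tm.liftR ρ) (p :: Γ) (p :: Δ)
  | 0, _, hn => hn
  | n + 1, q, hn => hρ n q hn

theorem IsRenaming.succ (Γ : Ctx) (p : Frag × Ty) : IsRenaming Nat.succ Γ (p :: Γ) :=
  fun _ _ hn => hn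

theorem Typing.rename {Γ Δ θ a A} (h : Typing Γ θ a A) {ρ : ℕ → ℕ} (hρ : IsRenaming ρ Γ Δ) :
    Typing Δ θ (a.rename ρ) A := by
  induction h generalizing Δ ρ with
  | tvar hn => exact .tvar (hρ _ _ hn)
  | tlam _ ih => exact .tlam (ih (hρ.liftR _))
  | trec _ ih => exact .trec (ih ((hρ.liftR _).liftR _))
  | tboxP _ ih => exact .tboxP (ih hρ)
  | tboxL _ ih => exact .tboxL (ih hρ)
  | tboxLV hv _ ih => exact .tboxLV (hv.rename ρ) (ih hρ)
  | tunbox _ _ ih1 ih2 => exact .tunbox (ih1 hρ) (ih2 (hρ.liftR _))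
  | tapp _ _ ih1 ih2 => exact .tapp (ih1 hρ) (ih2 hρ)
  | tunit => exact .tunit
  | tsub _ ih => exact .tsub (ih hρ)
  | tfoval hv hfo _ ih => exact .tfoval (hv.rename ρ) hfo (ih hρ)
  | tinl _ ih => exact .tinl (ih hρ)
  | tinr _ ih => exact .tinr (ih hρ)
  | tcase _ _ _ ih1 ih2 ih3 => exact .tcase (ih1 hρ) (ih2 (hρ.liftR _)) (ih3 (hρ.liftR _))
  | troll _ ih => exact .troll (ih hρ)
  | tunroll _ ih => exact .tunroll (ih hρ)

-- Restricted to values because the rules `tboxLV` and `tfoval` apply to values only.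
def IsValueSubst (σ : ℕ → Tm) (Γ Δ : Ctx) : Prop :=
  ∀ n, IsValue (σ n) ∧ ∀ θ A, Γ[n]? = some (θ, A) → Typing Δ θ (σ n) A

theorem IsValueSubst.liftS {σ : ℕ → Tm} {Γ Δ : Ctx} (hσ : IsValueSubst σ Γ Δ) (p : Frag × Ty) :
    IsValueSubst (Tm.liftS σ) (p :: Γ) (p :: Δ)
  | 0 => ⟨.var 0, fun _ _ hn => .tvar hn⟩
  | n + 1 => ⟨(hσ n).1.rename _, fun _ _ hn => ((hσ n).2 _ _ hn).rename (.succ Δ p)⟩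

theorem Typing.subst {Γ Δ θ a A} (h : Typing Γ θ a A) {σ : ℕ → Tm} (hσ : IsValueSubst σ Γ Δ) :
    Typing Δ θ (a.subst σ) A := by
  induction h generalizing Δ σ with
  | tvar hn => exact (hσ _).2 _ _ hn
  | tlam _ ih => exact .tlam (ih (hσ.liftS _))
  | trec _ ih => exact .trec (ih ((hσ.liftS _).liftS _))
  | tboxP _ ih => exact .tboxP (ih hσ)
  | tboxL _ ih => exact .tboxL (ih hσ)
  | tboxLV hv _ ih => exact .tboxLV (hv.subst fun n => (hσ n).1) (ih hσ)
  | tunbox _ _ ih1 ih2 => exact .tunbox (ih1 hσ) (ih2 (hσ.liftS _))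
  | tapp _ _ ih1 ih2 => exact .tapp (ih1 hσ) (ih2 hσ)
  | tunit => exact .tunit
  | tsub _ ih => exact .tsub (ih hσ)
  | tfoval hv hfo _ ih => exact .tfoval (hv.subst fun n => (hσ n).1) hfo (ih hσ)
  | tinl _ ih => exact .tinl (ih hσ)
  | tinr _ ih => exact .tinr (ih hσ)
  | tcase _ _ _ ih1 ih2 ih3 => exact .tcase (ih1 hσ) (ih2 (hσ.liftS _)) (ih3 (hσ.liftS _))
  | troll _ ih => exact .troll (ih hσ)
  | tunroll _ ih => exact .tunroll (ih hσ)

theorem IsValueSubst.var (Γ : Ctx) : IsValueSubst .var Γ Γ :=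
  fun n => ⟨.var n, fun _ _ hn => .tvar hn⟩

theorem IsValueSubst.cons {σ : ℕ → Tm} {Γ Δ : Ctx} {θ v A} (hv : IsValue v)
    (hvt : Typing Δ θ v A) (hσ : IsValueSubst σ Γ Δ) :
    IsValueSubst (fun n => match n with | 0 => v | n + 1 => σ n) ((θ, A) :: Γ) Δ
  | 0 => ⟨hv, fun _ _ hn => by cases hn; exact hvt⟩
  | n + 1 => hσ n

theorem Typing.subst1 {Γ θ θ' b v A B} (hb : Typing ((θ', A) :: Γ) θ b B)
    (hv : IsValue v) (hvt : Typing Γ θ' v A) : Typing Γ θ (subst1 b v) B :=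
  hb.subst (.cons hv hvt (.var Γ))

theorem Typing.subst2 {Γ θ θ₁ θ₂ b v w A₁ A₂ B}
    (hb : Typing ((θ₁, A₁) :: (θ₂, A₂) :: Γ) θ b B)
    (hv : IsValue v) (hvt : Typing Γ θ₁ v A₁) (hw : IsValue w) (hwt : Typing Γ θ₂ w A₂) :
    Typing Γ θ (subst2 b v w) B := by
  have hσ := IsValueSubst.cons hv hvt (.cons hw hwt (.var Γ))
  exact hb.subst fun
    | 0 => hσ 0
    | 1 => hσ 1
    | n + 2 => hσ (n + 2)

theorem Typing.box_inv {Γ θ θ' b B} (h : Typing Γ θ (.box b) (.at_ B θ')) : Typing Γ θ' b B := by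
  generalize ht : Tm.box b = t, hT : Ty.at_ B θ' = T at h
  induction h with
  | tboxP h | tboxLV _ h => cases ht; cases hT; exact h
  | tboxL h => cases ht; cases hT; exact h.of_L θ'
  | tsub _ ih | tfoval _ _ _ ih => exact ih ht hT
  | _ => cases ht

theorem Typing.lam_inv {Γ θ θ' a A B} (h : Typing Γ θ (.lam a) (.arrow A θ' B)) :
    Typing ((θ', A) :: Γ) .L a B := by
  generalize ht : Tm.lam a = t, hT : Ty.arrow A θ' B = T at h
  induction h with
  | tlam h => cases ht; cases hT; exact h
  | tsub _ ih => exact ih ht hT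
  | tfoval _ hfo => cases hT; cases hfo
  | _ => cases ht

theorem Typing.recc_inv {Γ θ θ' a A B} (h : Typing Γ θ (.recc a) (.arrow A θ' B)) :
    θ = .P ∧ Typing ((θ', A) :: (.P, .arrow A θ' B) :: Γ) .P a B := by
  generalize ht : Tm.recc a = t, hT : Ty.arrow A θ' B = T at h
  induction h with
  | trec h => cases ht; cases hT; exact ⟨rfl, h⟩
  | tsub _ ih => exact ⟨rfl, (ih ht hT).2⟩
  | tfoval _ hfo => cases hT; cases hfo
  | _ => cases ht

theorem Typing.inl_inv {Γ θ v A B} (h : Typing Γ θ (.inl v) (.sum A B)) : Typing Γ θ v A := by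
  generalize ht : Tm.inl v = t, hT : Ty.sum A B = T at h
  induction h with
  | tinl h => cases ht; cases hT; exact h
  | tsub _ ih => exact .tsub (ih ht hT)
  | tfoval hv hfo _ ih =>
    cases ht; cases hT
    cases hv with | inl hv => cases hfo with | sum hA _ => exact .tfoval hv hA (ih rfl rfl)
  | _ => cases ht

theorem Typing.inr_inv {Γ θ v A B} (h : Typing Γ θ (.inr v) (.sum A B)) : Typing Γ θ v B := by
  generalize ht : Tm.inr v = t, hT : Ty.sum A B = T at h
  induction h with
  | tinr h => cases ht; cases hT; exact h
  | tsub _ ih => exact .tsub (ih ht hT)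
  | tfoval hv hfo _ ih =>
    cases ht; cases hT
    cases hv with | inr hv => cases hfo with | sum _ hB => exact .tfoval hv hB (ih rfl rfl)
  | _ => cases ht

theorem Typing.roll_inv {Γ θ v A} (h : Typing Γ θ (.roll v) (.mu A)) :
    Typing Γ .P v (tsubst0 (.mu A) A) := by
  generalize ht : Tm.roll v = t, hT : Ty.mu A = T at h
  induction h with
  | troll h => cases ht; cases hT; exact h
  | tsub _ ih => exact ih ht hT
  | tfoval _ hfo => cases hT; cases hfo
  | _ => cases ht

/-- Preservation: typing is preserved by reduction. -/
theorem preservation {Γ : Ctx} {θ : Frag} {a a' : Tm} {A : Ty}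
    (h : Typing Γ θ a A) (hs : Step a a') : Typing Γ θ a' A := by
  induction h generalizing a' with
  | tboxP _ ih => cases hs with | box hs => exact .tboxP (ih hs)
  | tboxL _ ih => cases hs with | box hs => exact .tboxL (ih hs)
  | tboxLV hv => cases hs with | box hs => exact absurd hs hv.not_step
  | tsub _ ih => exact .tsub (ih hs)
  | tfoval hv => exact absurd hs hv.not_step
  | tinl _ ih => cases hs with | inl hs => exact .tinl (ih hs)
  | tinr _ ih => cases hs with | inr hs => exact .tinr (ih hs)
  | tunbox ha hb ih =>
    cases hs with
    | unbox hv => exact hb.subst1 hv ha.box_inv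
    | unbox1 hs => exact .tunbox (ih hs) hb
  | tapp hf hx ihf ihx =>
    cases hs with
    | beta hv => exact (hf.lam_inv.subst1 hv hx.box_inv).of_L _
    | betaRec hv =>
      obtain ⟨rfl, hbody⟩ := hf.recc_inv
      exact hbody.subst2 hv hx.box_inv (.recc _) hf
    | app1 hs => exact .tapp (ihf hs) hx
    | app2 _ hs => exact .tapp hf (ihx (.box hs))
  | tcase ha hb₁ hb₂ ih =>
    cases hs with
    | caseL hv => exact hb₁.subst1 hv ha.box_inv.inl_inv
    | caseR hv => exact hb₂.subst1 hv ha.box_inv.inr_inv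
    | caseCtx hs => exact .tcase (ih (.box hs)) hb₁ hb₂
  | troll _ ih => cases hs with | roll hs => exact .troll (ih hs)
  | tunroll ha ih =>
    cases hs with
    | unroll => exact ha.roll_inv
    | unrollCtx hs => exact .tunroll (ih hs)
  | _ => cases hs
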